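/- In the external-synchronization setting: let s ∈ ℕ be such that every directed cycle of H has nonnegative ω^s-weight, and let a be a time. Then for every time t ≥ a + Ψ^s(a)/(ζ−ϑ), the potential of the virtual node vanishes: Ψ_{v₀}^s(t) = 0. -/

import Mathlib

open SimpleGraph

namespace GCS

variable {V : Type*}

def edgeWt (δ O : V → V → ℝ) (s : ℝ) (v w : V) : ℝ :=
  4 * s * δ v w - O v w

def walkWt {G : SimpleGraph V} (δ O : V → V → ℝ) (s : ℝ) {v w : V}
    (p : G.Walk v w) : ℝ :=
  (p.darts.map fun d => edgeWt δ O s d.toProd.1 d.toProd.2).sum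

def NonnegCycles (G : SimpleGraph V) (δ O : V → V → ℝ) (s : ℝ) : Prop :=
  ∀ (v : V) (c : G.Walk v v), c.IsCycle → 0 ≤ walkWt δ O s c

noncomputable def dS (G : SimpleGraph V) (δ O : V → V → ℝ) (s : ℝ) (v w : V) : ℝ :=
  sInf {x : ℝ | ∃ p : G.Walk v w, walkWt δ O s p = x}

noncomputable def Psi (G : SimpleGraph V) (δ O : V → V → ℝ) (s : ℝ)
    (L : V → ℝ → ℝ) (v : V) (t : ℝ) : ℝ :=
  sSup {x : ℝ | ∃ w : V, ∃ p : G.Walk v w, x = L w t - L v t - walkWt δ O s p}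

noncomputable def PsiAll (G : SimpleGraph V) (δ O : V → V → ℝ) (s : ℝ)
    (L : V → ℝ → ℝ) (t : ℝ) : ℝ :=
  ⨆ v : V, Psi G δ O s L v t

noncomputable def PsiE (G : SimpleGraph V) (δ O : V → V → ℝ) (s : ℝ)
    (L : V → ℝ → ℝ) (v : V) (t : ℝ) : EReal :=
  ⨆ w : V, ⨆ p : G.Walk v w, ((L w t - L v t - walkWt δ O s p : ℝ) : EReal)

def SlowCondAt (G : SimpleGraph V) (δ O : V → V → ℝ) (L : V → ℝ → ℝ)
    (v : V) (t : ℝ) (s : ℕ) : Prop :=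
  (∃ w, G.Adj v w ∧ 4 * (s : ℝ) * δ v w ≤ L v t - L w t - O v w) ∧
  (∀ w, G.Adj v w → -(4 * (s : ℝ) * δ v w) ≤ L v t - L w t - O v w)

def FastCondAt (G : SimpleGraph V) (δ O : V → V → ℝ) (L : V → ℝ → ℝ)
    (v : V) (t : ℝ) (s : ℕ) : Prop :=
  (∃ w, G.Adj v w ∧ L v t - L w t - O v w ≤ -((4 * (s : ℝ) + 2) * δ v w)) ∧
  (∀ w, G.Adj v w → L v t - L w t - O v w ≤ (4 * (s : ℝ) + 2) * δ v w)

def Admissible (G : SimpleGraph V) (δ O : V → V → ℝ) (L : V → ℝ → ℝ)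
    (ϑ μ : ℝ) : Prop :=
  ∀ (v : V) (t : ℝ),
    ((∃ s : ℕ, SlowCondAt G δ O L v t s) → deriv (L v) t ≤ ϑ) ∧
    ((∃ s : ℕ, FastCondAt G δ O L v t s) → 1 + μ ≤ deriv (L v) t)

def AdmissibleOn (G : SimpleGraph V) (δ O : V → V → ℝ) (L : V → ℝ → ℝ)
    (ϑ μ : ℝ) (a b : ℝ) : Prop :=
  ∀ (v : V), ∀ t ∈ Set.Icc a b,
    ((∃ s : ℕ, SlowCondAt G δ O L v t s) → deriv (L v) t ≤ ϑ) ∧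
    ((∃ s : ℕ, FastCondAt G δ O L v t s) → 1 + μ ≤ deriv (L v) t)

end GCS

/-!
Since cycles and round trips `u → v → u` have nonnegative weight, so do all closed walks; hence
the minimal weight `dS v₀ w` of a walk from `v₀` to `w` is attained (by a path), and
`Ψ_{v₀}(t) = max_w (L_w(t) - L_{v₀}(t) - dS v₀ w)` is a maximum of finitely many differentiable
functions, whose term `w = v₀` is `0`. When `Ψ_{v₀}(t) > 0`, a maximizing `w` is not `v₀` and
satisfies the slow condition at level `s`: it is ahead of its predecessor on a shortest walk
from `v₀` by at least that edge's weight, and behind no neighbour by more than the reverse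
weight. So `L_w` grows at rate at most `ϑ` while `L_{v₀}` grows at rate `ζ`, and the right
Dini derivative of `Ψ_{v₀}` is at most `ϑ - ζ < 0`. Hence `Ψ_{v₀}` decreases at rate `ζ - ϑ`
until it reaches `0`, at the latest at `a + Ψ(a)/(ζ - ϑ)`, and it cannot become positive again.
-/

open Filter Topology Set

lemma eventually_slope_sup'_lt {ι : Type*} {S : Finset ι} (hS : S.Nonempty)
    {f : ι → ℝ → ℝ} {f' : ι → ℝ} {x r : ℝ}
    (hf : ∀ i ∈ S, HasDerivWithinAt (f i) (f' i) (Ioi x) x)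
    (hr : ∀ i ∈ S, f i x = S.sup' hS (f · x) → f' i < r) :
    ∀ᶠ z in 𝓝[>] x, slope (fun y => S.sup' hS (f · y)) x z < r := by
  set F : ℝ → ℝ := fun y => S.sup' hS (f · y)
  have hbelow : ∀ i ∈ S, ∀ᶠ z in 𝓝[>] x, f i z < F x + r * (z - x) := by
    intro i hi
    by_cases hact : f i x = F x
    · have hslope := hasDerivWithinAt_iff_tendsto_slope.mp (hf i hi)
      rw [sdiff_singleton_eq_self self_notMem_Ioi] at hslope
      filter_upwards [hslope.eventually (gt_mem_nhds (hr i hi hact)), self_mem_nhdsWithin]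
        with z hz hxz
      rw [slope_def_field, div_lt_iff₀ (sub_pos.2 hxz)] at hz
      linarith
    · have hlt : f i x - r * (x - x) < F x := by
        simpa using lt_of_le_of_ne (Finset.le_sup' (f · x) hi) hact
      have hcont : ContinuousWithinAt (fun z => f i z - r * (z - x)) (Ioi x) x :=
        (hf i hi).continuousWithinAt.sub (by fun_prop)
      filter_upwards [hcont.eventually_lt_const hlt] with z hz
      linarith
  filter_upwards [(eventually_all_finset S).2 hbelow, self_mem_nhdsWithin] with z hz hxz
  rw [slope_def_field, div_lt_iff₀ (sub_pos.2 hxz), sub_lt_iff_lt_add']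
  exact (Finset.sup'_lt_iff hS).2 hz

/-- Here `F'` bounds the lower right Dini derivative of `F` at `x`. -/
lemma le_max_sub_mul_of_frequently_slope_lt {F : ℝ → ℝ} {c a t : ℝ} (hc : 0 < c)
    (hat : a ≤ t) (hF : ContinuousOn F (Icc a t))
    (hslope : ∀ x ∈ Ico a t, ∃ F' : ℝ, (0 < F x → F' ≤ -c) ∧
      ∀ r, F' < r → ∃ᶠ z in 𝓝[>] x, slope F x z < r) :
    F t ≤ max (F a - c * (t - a)) 0 := by
  choose! F' hF'neg hF'slope using hslope
  by_contra! h
  rw [max_lt_iff] at h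
  by_cases hpos : ∀ x ∈ Icc a t, 0 < F x
  · have := image_le_of_liminf_slope_right_le_deriv_boundary hF
      (B := fun x => F a - c * (x - a)) (B' := fun _ => -c) (by simp) (by fun_prop)
      (fun x _ => by
        simpa using ((hasDerivWithinAt_id x _).sub_const a).const_mul c |>.const_sub (F a))
      (fun x hx r hr =>
        hF'slope x hx r ((hF'neg x hx (hpos x (Ico_subset_Icc_self hx))).trans_lt hr))
      ⟨hat, le_rfl⟩
    linarith [h.1]
  · push Not at hpos
    obtain ⟨τ, hτ, hFτ⟩ := hpos
    have hsub : Ico τ t ⊆ Ico a t := Ico_subset_Ico_left hτ.1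
    have := image_le_of_liminf_slope_right_lt_deriv_boundary'
      (hF.mono (Icc_subset_Icc_left hτ.1)) (fun x hx => hF'slope x (hsub hx))
      (B := fun _ => F t / 2) (B' := fun _ => 0) (by linarith [h.2]) continuousOn_const
      (fun x _ => hasDerivWithinAt_const x _ _)
      (fun x hx hcontact => (hF'neg x (hsub hx) (by linarith [h.2])).trans_lt (by linarith))
      ⟨hτ.2, le_rfl⟩
    linarith [h.2]

namespace GCS

variable {V : Type*} {G : SimpleGraph V} {δ O : V → V → ℝ} {s : ℝ}

@[simp] lemma walkWt_nil {v : V} : walkWt δ O s (Walk.nil : G.Walk v v) = 0 := rfl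

@[simp] lemma walkWt_cons {u v w : V} (h : G.Adj u v) (p : G.Walk v w) :
    walkWt δ O s (Walk.cons h p) = edgeWt δ O s u v + walkWt δ O s p := by
  simp [walkWt]

@[simp] lemma walkWt_append {u v w : V} (p : G.Walk u v) (q : G.Walk v w) :
    walkWt δ O s (p.append q) = walkWt δ O s p + walkWt δ O s q := by
  simp [walkWt]

lemma walkWt_concat {u v w : V} (p : G.Walk u v) (h : G.Adj v w) :
    walkWt δ O s (p.concat h) = walkWt δ O s p + edgeWt δ O s v w := by
  simp [Walk.concat_eq_append]

/-- `IsCycle` asks for length at least `3`, so the closed walks `u → v → u` are not covered by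
`NonnegCycles`. -/
def NonnegRoundTrips (G : SimpleGraph V) (δ O : V → V → ℝ) (s : ℝ) : Prop :=
  ∀ u v, G.Adj u v → 0 ≤ edgeWt δ O s u v + edgeWt δ O s v u

lemma nonnegRoundTrips_of_nonneg (hs : 0 ≤ s) (hδ : ∀ u v, G.Adj u v → 0 ≤ δ u v)
    (hO : ∀ u v, G.Adj u v → O u v = -O v u) : NonnegRoundTrips G δ O s := by
  intro u v h
  unfold edgeWt
  nlinarith [mul_nonneg hs (hδ u v h), mul_nonneg hs (hδ v u h.symm), hO u v h]

/-- Closing a path by one edge gives either a cycle or a walk that goes back and forth along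
that edge. -/
lemma walkWt_cons_nonneg_of_isPath (hnc : NonnegCycles G δ O s)
    (hback : NonnegRoundTrips G δ O s)
    {u v : V} (h : G.Adj u v) {q : G.Walk v u} (hq : q.IsPath) :
    0 ≤ walkWt δ O s (Walk.cons h q) := by
  cases q with
  | nil => exact absurd rfl h.ne
  | @cons _ x _ h' q' =>
    by_cases hx : x = u
    · subst hx
      obtain rfl : q' = Walk.nil := Walk.eq_nil_iff_nil.mpr (Walk.isPath_iff_nil.mp hq.of_cons)
      simpa using hback _ _ h
    · refine hnc u _ ((Walk.cons_isCycle_iff _ h).mpr ⟨hq, fun he => ?_⟩)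
      rw [Walk.edges_cons, List.mem_cons] at he
      rcases he with he | he
      · rcases Sym2.eq_iff.mp he with ⟨rfl, -⟩ | ⟨rfl, -⟩
        exacts [absurd rfl h.ne, hx rfl]
      · exact (Walk.cons_isPath_iff _ _).mp hq |>.2 (q'.snd_mem_support_of_mem_edges he)

lemma walkWt_bypass_le [DecidableEq V] (hnc : NonnegCycles G δ O s)
    (hback : NonnegRoundTrips G δ O s)
    {u v : V} (p : G.Walk u v) : walkWt δ O s p.bypass ≤ walkWt δ O s p := by
  induction p with
  | nil => rfl
  | @cons u w v h p ih =>
    rw [Walk.bypass, walkWt_cons]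
    split_ifs with hu
    · have hloop := walkWt_cons_nonneg_of_isPath hnc hback h (p.bypass_isPath.takeUntil hu)
      have hsplit := congrArg (walkWt δ O s) (p.bypass.take_spec hu)
      rw [walkWt_append] at hsplit
      rw [walkWt_cons] at hloop
      linarith
    · rw [walkWt_cons]
      linarith

lemma exists_forall_walkWt_le [Finite V] (hnc : NonnegCycles G δ O s)
    (hback : NonnegRoundTrips G δ O s)
    {u v : V} (huv : G.Reachable u v) :
    ∃ p : G.Walk u v, ∀ q : G.Walk u v, walkWt δ O s p ≤ walkWt δ O s q := by
  classical
  have : Fintype V := Fintype.ofFinite V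
  have : Nonempty (G.Path u v) := ⟨huv.some.toPath⟩
  obtain ⟨p, hp⟩ := Finite.exists_min fun p : G.Path u v => walkWt δ O s p.1
  exact ⟨p, fun q => (hp q.toPath).trans (walkWt_bypass_le hnc hback q)⟩

lemma isLeast_dS [Finite V] (hnc : NonnegCycles G δ O s)
    (hback : NonnegRoundTrips G δ O s)
    {u v : V} (huv : G.Reachable u v) :
    IsLeast {x | ∃ p : G.Walk u v, walkWt δ O s p = x} (dS G δ O s u v) := by
  obtain ⟨p, hp⟩ := exists_forall_walkWt_le hnc hback huv
  have hleast : IsLeast {x | ∃ p : G.Walk u v, walkWt δ O s p = x} (walkWt δ O s p) :=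
    ⟨⟨p, rfl⟩, by rintro _ ⟨q, rfl⟩; exact hp q⟩
  rw [dS, hleast.csInf_eq]
  exact hleast

section ShortestWalks

variable [Finite V] (hnc : NonnegCycles G δ O s)
  (hback : NonnegRoundTrips G δ O s)
include hnc hback

lemma dS_le_walkWt {v w : V} (p : G.Walk v w) : dS G δ O s v w ≤ walkWt δ O s p :=
  (isLeast_dS hnc hback ⟨p⟩).2 ⟨p, rfl⟩

lemma dS_self (v : V) : dS G δ O s v v = 0 := by
  classical
  obtain ⟨p, hp⟩ := (isLeast_dS hnc hback (Reachable.refl v)).1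
  have hbypass : p.bypass = Walk.nil :=
    Walk.eq_nil_iff_nil.mpr (Walk.isPath_iff_nil.mp p.bypass_isPath)
  have hp0 := walkWt_bypass_le hnc hback p
  rw [hbypass, walkWt_nil] at hp0
  exact le_antisymm (dS_le_walkWt hnc hback Walk.nil) (hp ▸ hp0)

lemma dS_le_dS_add_edgeWt {v w u : V} (hvw : G.Reachable v w) (h : G.Adj w u) :
    dS G δ O s v u ≤ dS G δ O s v w + edgeWt δ O s w u := by
  obtain ⟨p, hp⟩ := (isLeast_dS hnc hback hvw).1
  rw [← hp, ← walkWt_concat p h]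
  exact dS_le_walkWt hnc hback _

lemma exists_adj_dS_add_edgeWt_le {v w : V} (hvw : G.Reachable v w) (hne : w ≠ v) :
    ∃ u, G.Adj u w ∧ dS G δ O s v u + edgeWt δ O s u w ≤ dS G δ O s v w := by
  obtain ⟨p, hp⟩ := (isLeast_dS hnc hback hvw).1
  have hadj := p.adj_penultimate (fun hnil => hne (hnil.eq).symm)
  refine ⟨_, hadj, ?_⟩
  have hsplit := walkWt_concat (δ := δ) (O := O) (s := s) p.dropLast hadj
  rw [Walk.concat_dropLast] at hsplit
  linarith [dS_le_walkWt hnc hback p.dropLast]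

end ShortestWalks

lemma Psi_eq_sup' [Fintype V] (hnc : NonnegCycles G δ O s)
    (hback : NonnegRoundTrips G δ O s)
    (hconn : G.Connected) (L : V → ℝ → ℝ) (v : V) (t : ℝ) :
    Psi G δ O s L v t =
      Finset.univ.sup' ⟨v, Finset.mem_univ v⟩ fun w => L w t - L v t - dS G δ O s v w := by
  apply IsGreatest.csSup_eq
  constructor
  · obtain ⟨w, -, hw⟩ := Finset.exists_mem_eq_sup' ⟨v, Finset.mem_univ v⟩
      fun w => L w t - L v t - dS G δ O s v w
    obtain ⟨p, hp⟩ := (isLeast_dS hnc hback (hconn v w)).1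
    exact ⟨w, p, by rw [hw, hp]⟩
  · rintro _ ⟨w, p, rfl⟩
    refine le_trans ?_ (Finset.le_sup' (fun w => L w t - L v t - dS G δ O s v w)
      (Finset.mem_univ w))
    linarith [dS_le_walkWt hnc hback p]

lemma Psi_nonneg [Fintype V] (hnc : NonnegCycles G δ O s)
    (hback : NonnegRoundTrips G δ O s)
    (hconn : G.Connected) (L : V → ℝ → ℝ) (v : V) (t : ℝ) :
    0 ≤ Psi G δ O s L v t := by
  rw [Psi_eq_sup' hnc hback hconn]
  refine le_of_eq_of_le ?_ (Finset.le_sup' (fun w => L w t - L v t - dS G δ O s v w)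
    (Finset.mem_univ v))
  simp [dS_self hnc hback]

lemma slowCondAt_of_forall_le [Finite V] {n : ℕ} (hnc : NonnegCycles G δ O n)
    (hback : NonnegRoundTrips G δ O n)
    (hconn : G.Connected) (hδ : ∀ u v, G.Adj u v → δ u v = δ v u)
    (hO : ∀ u v, G.Adj u v → O u v = -O v u) {L : V → ℝ → ℝ} {v w : V} {t : ℝ}
    (hne : w ≠ v) (hmax : ∀ u, L u t - dS G δ O n v u ≤ L w t - dS G δ O n v w) :
    SlowCondAt G δ O L w t n := by
  constructor
  · obtain ⟨u, hu, hle⟩ := exists_adj_dS_add_edgeWt_le hnc hback (hconn v w) hne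
    refine ⟨u, hu.symm, ?_⟩
    rw [edgeWt, hδ u w hu, hO u w hu] at hle
    linarith [hmax u]
  · intro u hu
    have hle := dS_le_dS_add_edgeWt hnc hback (hconn v w) hu
    rw [edgeWt] at hle
    linarith [hmax u]

lemma ne_and_slowCondAt_of_Psi_pos [Fintype V] {n : ℕ} (hnc : NonnegCycles G δ O n)
    (hback : NonnegRoundTrips G δ O n)
    (hconn : G.Connected) (hδ : ∀ u v, G.Adj u v → δ u v = δ v u)
    (hO : ∀ u v, G.Adj u v → O u v = -O v u) {L : V → ℝ → ℝ} {v w : V} {t : ℝ}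
    (hpos : 0 < Psi G δ O n L v t)
    (hw : L w t - L v t - dS G δ O n v w = Psi G δ O n L v t) :
    w ≠ v ∧ SlowCondAt G δ O L w t n := by
  have hne : w ≠ v := by
    rintro rfl
    simp only [sub_self, dS_self hnc hback] at hw
    exact hpos.ne hw
  refine ⟨hne, slowCondAt_of_forall_le hnc hback hconn hδ hO hne fun u => ?_⟩
  have hu := Finset.le_sup' (fun u => L u t - L v t - dS G δ O n v u) (Finset.mem_univ u)
  rw [← Psi_eq_sup' hnc hback hconn, ← hw] at hu
  linarith

lemma continuous_Psi [Fintype V] (hnc : NonnegCycles G δ O s)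
    (hback : NonnegRoundTrips G δ O s)
    (hconn : G.Connected) {L : V → ℝ → ℝ} (hL : ∀ w, Continuous (L w)) (v : V) :
    Continuous (Psi G δ O s L v) := by
  rw [funext (Psi_eq_sup' hnc hback hconn L v)]
  exact Continuous.finset_sup'_apply _ fun w _ => by fun_prop

lemma exists_slope_bound_Psi [Fintype V] {n : ℕ} (hnc : NonnegCycles G δ O n)
    (hback : NonnegRoundTrips G δ O n)
    (hconn : G.Connected) (hδ : ∀ u v, G.Adj u v → δ u v = δ v u)
    (hO : ∀ u v, G.Adj u v → O u v = -O v u) {L : V → ℝ → ℝ} {v : V} {ϑ ζ : ℝ}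
    (hdiff : ∀ w, Differentiable ℝ (L w)) (hv : ∀ t, deriv (L v) t = ζ)
    (hslow : ∀ w, w ≠ v → ∀ t, SlowCondAt G δ O L w t n → deriv (L w) t ≤ ϑ) (x : ℝ) :
    ∃ F' : ℝ, (0 < Psi G δ O n L v x → F' ≤ -(ζ - ϑ)) ∧
      ∀ r, F' < r → ∃ᶠ z in 𝓝[>] x, slope (Psi G δ O n L v) x z < r := by
  have hPsi := funext (Psi_eq_sup' hnc hback hconn L v)
  have hderiv : ∀ w ∈ Finset.univ, HasDerivWithinAt (fun y => L w y - L v y - dS G δ O n v w)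
      (deriv (L w) x - ζ) (Ioi x) x := fun w _ =>
    (((hdiff w x).hasDerivAt.sub (hv x ▸ (hdiff v x).hasDerivAt)).sub_const _).hasDerivWithinAt
  by_cases hpos : 0 < Psi G δ O n L v x
  · refine ⟨-(ζ - ϑ), fun _ => le_rfl, fun r hr => ?_⟩
    rw [hPsi]
    refine (eventually_slope_sup'_lt _ hderiv fun w _ hw => ?_).frequently
    obtain ⟨hne, hslowAt⟩ := ne_and_slowCondAt_of_Psi_pos hnc hback hconn hδ hO hpos
      (hw.trans (Psi_eq_sup' hnc hback hconn L v x).symm)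
    linarith [hslow w hne x hslowAt]
  · refine ⟨Finset.univ.sup' ⟨v, Finset.mem_univ v⟩ fun w => deriv (L w) x - ζ,
      fun h => absurd h hpos, fun r hr => ?_⟩
    rw [hPsi]
    exact (eventually_slope_sup'_lt _ hderiv fun w _ _ =>
      (Finset.le_sup' (fun w => deriv (L w) x - ζ) (Finset.mem_univ w)).trans_lt hr).frequently

end GCS

theorem virtual_node_potential_vanishes_general
    {V' : Type*} [Fintype V']
    (v₀ : V') (H : SimpleGraph V') (hconn : H.Connected)
    (δ O : V' → V' → ℝ)
    (hδpos : ∀ v w, H.Adj v w → 0 < δ v w)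
    (hδsym : ∀ v w, H.Adj v w → δ v w = δ w v)
    (hOanti : ∀ v w, H.Adj v w → O v w = -O w v)
    (L : V' → ℝ → ℝ) (ϑ ζ : ℝ)
    (hζϑ : ϑ < ζ)
    (hdiff : ∀ v, Differentiable ℝ (L v))
    (hv₀ : ∀ t : ℝ, deriv (L v₀) t = ζ)
    (hslow : ∀ v : V', v ≠ v₀ → ∀ t : ℝ,
      (∃ s : ℕ, GCS.SlowCondAt H δ O L v t s) → deriv (L v) t ≤ ϑ)
    (s : ℕ) (hnc : GCS.NonnegCycles H δ O (s : ℝ))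
    (a : ℝ) :
    ∀ t : ℝ, a + GCS.PsiAll H δ O (s : ℝ) L a / (ζ - ϑ) ≤ t →
      GCS.Psi H δ O (s : ℝ) L v₀ t = 0 := by
  have hback : GCS.NonnegRoundTrips H δ O s :=
    GCS.nonnegRoundTrips_of_nonneg s.cast_nonneg (fun u v h => (hδpos u v h).le) hOanti
  have hΨ : ∀ v x, 0 ≤ GCS.Psi H δ O s L v x := GCS.Psi_nonneg hnc hback hconn L
  have hc : 0 < ζ - ϑ := sub_pos.2 hζϑ
  have hΨa : GCS.Psi H δ O s L v₀ a ≤ GCS.PsiAll H δ O s L a :=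
    le_ciSup (f := fun v => GCS.Psi H δ O s L v a) (Set.finite_range _).bddAbove v₀
  intro t ht
  have hΨall : GCS.PsiAll H δ O s L a ≤ (ζ - ϑ) * (t - a) := by
    rw [← div_le_iff₀' hc]
    linarith
  have hat : a ≤ t := by nlinarith [hΨ v₀ a]
  have hdecay := le_max_sub_mul_of_frequently_slope_lt hc hat
    (GCS.continuous_Psi hnc hback hconn (fun v => (hdiff v).continuous) v₀).continuousOn
    fun x _ => GCS.exists_slope_bound_Psi hnc hback hconn hδsym hOanti hdiff hv₀
      (fun v hv t h => hslow v hv t ⟨s, h⟩) x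
  exact le_antisymm (hdecay.trans (max_le (by linarith) le_rfl)) (hΨ v₀ t)

/-- external synchronization: for all times
`t ≥ a + Ψ^s(a)/(ζ-ϑ)`, the potential of the virtual node vanishes: `Ψ_{v₀}^s(t) = 0`. -/
theorem virtual_node_potential_vanishes
    {V' : Type*} [Fintype V'] [DecidableEq V'] [Nonempty V']
    (v₀ : V') (H : SimpleGraph V') (hconn : H.Connected)
    (δ O : V' → V' → ℝ)
    (hδpos : ∀ v w, H.Adj v w → 0 < δ v w)
    (hδsym : ∀ v w, H.Adj v w → δ v w = δ w v)
    (hOanti : ∀ v w, H.Adj v w → O v w = -O w v)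
    (L : V' → ℝ → ℝ) (ϑ μ ζ : ℝ)
    (hϑ : 1 < ϑ) (hμ : 0 < μ) (hζϑ : ϑ < ζ) (hζμ : ζ < 1 + μ)
    (hdiff : ∀ v, Differentiable ℝ (L v))
    (hv₀ : ∀ t : ℝ, deriv (L v₀) t = ζ)
    (hlo : ∀ v : V', v ≠ v₀ → ∀ t : ℝ, 1 ≤ deriv (L v) t)
    (hhi : ∀ v : V', v ≠ v₀ → ∀ t : ℝ, deriv (L v) t ≤ ϑ * (1 + μ))
    (hslow : ∀ v : V', v ≠ v₀ → ∀ t : ℝ,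
      (∃ s : ℕ, GCS.SlowCondAt H δ O L v t s) → deriv (L v) t ≤ ϑ)
    (hfast : ∀ v : V', v ≠ v₀ → ∀ t : ℝ,
      (∃ s : ℕ, GCS.FastCondAt H δ O L v t s) → 1 + μ ≤ deriv (L v) t)
    (s : ℕ) (hnc : GCS.NonnegCycles H δ O (s : ℝ))
    (a : ℝ) :
    ∀ t : ℝ, a + GCS.PsiAll H δ O (s : ℝ) L a / (ζ - ϑ) ≤ t →
      GCS.Psi H δ O (s : ℝ) L v₀ t = 0 :=
  virtual_node_potential_vanishes_general v₀ H hconn δ O hδpos hδsym hOanti L ϑ ζ hζϑ hdiff hv₀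
    hslow s hnc a
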